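/- Let k ≥ 1, b > 0, ζ ∈ (0,1), and let X₁,…,X_k be independent Laplace(b) random variables. Then P[∑_{i=1}^k |X_i| ≥ 2kb + 2b·log(1/ζ)] ≤ ζ. (The sum ∑_{i=1}^k |X_i| has the Gamma distribution with shape k and scale b, and the bound follows from the Chernoff tail bound for the Gamma distribution.) -/

import Mathlib

/-!
Chernoff bound at the parameter `1 / (2b)`: tilting the Laplace(b) density by `exp (|x| / (2b))`
gives twice the Laplace(2b) density, so `E[exp (∑ |X_i| / (2b))] = 2 ^ k`. Markov's inequality then
bounds the probability by `2 ^ k e ^ (-k) ζ ≤ ζ`, since `2 ≤ e`.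
-/

open MeasureTheory
open scoped ENNReal

noncomputable section

/-- The k-fold product of the Laplace(b) distribution on ℝ^k, given by its density. -/
def laplacePi (k : ℕ) (b : ℝ) : Measure (Fin k → ℝ) :=
  volume.withDensity fun x => ENNReal.ofReal (∏ i, (1 / (2 * b)) * Real.exp (-|x i| / b))

def laplacePDF (b x : ℝ) : ℝ := 1 / (2 * b) * Real.exp (-|x| / b)

lemma laplacePi_eq_withDensity (k : ℕ) (b : ℝ) :
    laplacePi k b = volume.withDensity fun x => ENNReal.ofReal (∏ i, laplacePDF b (x i)) :=
  rfl

@[fun_prop]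
lemma measurable_laplacePDF (b : ℝ) : Measurable (laplacePDF b) := by
  unfold laplacePDF; fun_prop

lemma laplacePDF_nonneg {b : ℝ} (hb : 0 ≤ b) (x : ℝ) : 0 ≤ laplacePDF b x := by
  unfold laplacePDF; positivity

lemma integral_laplacePDF {b : ℝ} (hb : 0 < b) : ∫ x, laplacePDF b x = 1 := by
  have hIoi : ∫ x in Set.Ioi (0 : ℝ), Real.exp (-x / b) = b := by
    simpa [neg_div, div_eq_inv_mul, hb.ne'] using
      integral_exp_mul_Ioi (neg_lt_zero.2 (inv_pos.2 hb)) 0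
  unfold laplacePDF
  rw [integral_const_mul, integral_comp_abs (f := fun y => Real.exp (-y / b)), hIoi]
  field_simp

lemma integrable_laplacePDF {b : ℝ} (hb : 0 < b) : Integrable (laplacePDF b) :=
  Integrable.of_integral_ne_zero (by simp [integral_laplacePDF hb])

lemma exp_mul_laplacePDF {b : ℝ} (hb : b ≠ 0) (x : ℝ) :
    Real.exp (|x| / (2 * b)) * laplacePDF b x = 2 * laplacePDF (2 * b) x := by
  unfold laplacePDF
  rw [mul_left_comm, ← Real.exp_add]
  field_simp
  ring_nf

lemma lintegral_ofReal_prod_laplacePDF {ι : Type*} [Fintype ι] {b : ℝ} (hb : 0 < b) :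
    ∫⁻ x : ι → ℝ, ENNReal.ofReal (∏ i, laplacePDF b (x i)) = 1 := by
  rw [← ofReal_integral_eq_lintegral_ofReal]
  · simp [integral_fintype_prod_volume_eq_pow, integral_laplacePDF hb]
  · exact Integrable.fintype_prod (f := fun _ => laplacePDF b) fun _ => integrable_laplacePDF hb
  · exact Filter.Eventually.of_forall fun x =>
      Finset.prod_nonneg fun i _ => laplacePDF_nonneg hb.le _

lemma lintegral_exp_sum_abs_laplacePi (k : ℕ) {b : ℝ} (hb : 0 < b) :
    ∫⁻ x, ENNReal.ofReal (Real.exp ((∑ i, |x i|) / (2 * b))) ∂laplacePi k b = 2 ^ k := by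
  have tilt : ∀ x : Fin k → ℝ,
      ENNReal.ofReal (∏ i, laplacePDF b (x i)) * ENNReal.ofReal (Real.exp ((∑ i, |x i|) / (2 * b)))
        = 2 ^ k * ENNReal.ofReal (∏ i, laplacePDF (2 * b) (x i)) := fun x => by
    rw [mul_comm, ← ENNReal.ofReal_mul (Real.exp_pos _).le, Finset.sum_div, Real.exp_sum,
      ← Finset.prod_mul_distrib]
    simp_rw [exp_mul_laplacePDF hb.ne']
    rw [Finset.prod_mul_distrib, ENNReal.ofReal_mul (by positivity)]
    simp
  rw [laplacePi_eq_withDensity, lintegral_withDensity_eq_lintegral_mul₀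
    (Measurable.aemeasurable (by fun_prop)) (Measurable.aemeasurable (by fun_prop))]
  simp only [Pi.mul_apply, tilt]
  rw [lintegral_const_mul' _ _ (by simp), lintegral_ofReal_prod_laplacePDF (by positivity), mul_one]

lemma measure_ge_le_exp_mul_lintegral_exp {α : Type*} [MeasurableSpace α] (μ : Measure α)
    {S : α → ℝ} (hS : Measurable S) {t : ℝ} (ht : 0 ≤ t) (a : ℝ) :
    μ {x | a ≤ S x} ≤
      ENNReal.ofReal (Real.exp (-(t * a))) * ∫⁻ x, ENNReal.ofReal (Real.exp (t * S x)) ∂μ := by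
  have markov := mul_meas_ge_le_lintegral (μ := μ) (hS.const_mul t).exp.ennreal_ofReal
    (ENNReal.ofReal (Real.exp (t * a)))
  have hsub : {x | a ≤ S x} ⊆
      {x | ENNReal.ofReal (Real.exp (t * a)) ≤ ENNReal.ofReal (Real.exp (t * S x))} := fun x hx =>
    ENNReal.ofReal_le_ofReal (Real.exp_le_exp.2 (mul_le_mul_of_nonneg_left hx ht))
  calc μ {x | a ≤ S x}
      = ENNReal.ofReal (Real.exp (-(t * a))) *
          (ENNReal.ofReal (Real.exp (t * a)) * μ {x | a ≤ S x}) := by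
        rw [← mul_assoc, ← ENNReal.ofReal_mul (Real.exp_pos _).le, ← Real.exp_add, neg_add_cancel,
          Real.exp_zero, ENNReal.ofReal_one, one_mul]
    _ ≤ _ := by grw [measure_mono hsub, markov]

lemma two_pow_le_exp (k : ℕ) : (2 : ℝ) ^ k ≤ Real.exp k := by
  rw [← Real.exp_one_pow]
  gcongr
  linarith [Real.add_one_le_exp 1]

lemma laplacePi_sum_abs_ge_le (k : ℕ) {b : ℝ} (hb : 0 < b) (a : ℝ) :
    laplacePi k b {x | a ≤ ∑ i, |x i|} ≤ ENNReal.ofReal (Real.exp (-(a / (2 * b)))) * 2 ^ k := by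
  have chernoff := measure_ge_le_exp_mul_lintegral_exp (laplacePi k b)
    (S := fun x => ∑ i, |x i|) (by fun_prop) (t := 1 / (2 * b)) (by positivity) a
  simpa only [one_div_mul_eq_div, lintegral_exp_sum_abs_laplacePi k hb] using chernoff

theorem laplace_l1_concentration_general
    (k : ℕ) (b ζ : ℝ) (hb : 0 < b) (hζ : ζ ∈ Set.Ioo (0 : ℝ) 1) :
    laplacePi k b {x | 2 * (k : ℝ) * b + 2 * b * Real.log (1 / ζ) ≤ ∑ i, |x i|}
      ≤ ENNReal.ofReal ζ := by
  obtain ⟨hζ0, -⟩ := hζ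
  have exponent : -((2 * (k : ℝ) * b + 2 * b * Real.log (1 / ζ)) / (2 * b)) = -k + Real.log ζ := by
    rw [one_div ζ, Real.log_inv]; field_simp; ring
  refine (laplacePi_sum_abs_ge_le k hb _).trans ?_
  rw [exponent, Real.exp_add, Real.exp_log hζ0, ← ENNReal.ofReal_ofNat 2,
    ← ENNReal.ofReal_pow zero_le_two, ← ENNReal.ofReal_mul (by positivity)]
  refine ENNReal.ofReal_le_ofReal ?_
  calc Real.exp (-k) * ζ * 2 ^ k ≤ Real.exp (-k) * ζ * Real.exp k := by grw [two_pow_le_exp k]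
    _ = ζ := by rw [mul_right_comm, ← Real.exp_add, neg_add_cancel, Real.exp_zero, one_mul]

/-- **Concentration of the ℓ1 norm of a Laplace vector (Lemma 18 of the paper).**
For independent `Laplace(b)` coordinates `X₁,…,X_k` and `ζ ∈ (0,1)`,
`P[∑|X_i| ≥ 2kb + 2b·log(1/ζ)] ≤ ζ`. -/
theorem laplace_l1_concentration
    (k : ℕ) (hk : 1 ≤ k) (b ζ : ℝ) (hb : 0 < b) (hζ : ζ ∈ Set.Ioo (0 : ℝ) 1) :
    laplacePi k b {x | 2 * (k : ℝ) * b + 2 * b * Real.log (1 / ζ) ≤ ∑ i, |x i|}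
      ≤ ENNReal.ofReal ζ :=
  laplace_l1_concentration_general k b ζ hb hζ

end
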